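/- Let M and N be matroids with the same ground set E. The following are equivalent: (1) N is a quotient of M; (2) M* is a quotient of N*; (3) every flat of N is a flat of M; (4) every circuit of M is a union of circuits of N; (5) r_N(Y | X) ≤ r_M(Y | X) for all X ⊆ Y ⊆ E. -/

import Mathlib

open Set

namespace Matroid

variable {α : Type*} {ι : Type*}

/-- The deletion of a set `D` of elements from `M`. -/
def delete' (M : Matroid α) (D : Set α) : Matroid α := M ↾ (M.E \ D)

/-- The contraction of a set `C` of elements from `M`, defined as the dual of the
deletion of `C` from the dual. -/
def contract' (M : Matroid α) (C : Set α) : Matroid α := (M✶.delete' C)✶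

/-- A circuit of `M` is a minimal dependent subset of the ground set. -/
def Circuit (M : Matroid α) (C : Set α) : Prop :=
  C ⊆ M.E ∧ ¬ M.Indep C ∧ ∀ I, I ⊂ C → M.Indep I

/-- The rank of a set `X` in `M`, valued in `ℕ∞`. It is the supremum of the `encard`s of
the independent subsets of `X`; equivalently, the `encard` of any basis of `X`. -/
noncomputable def eRk' (M : Matroid α) (X : Set α) : ℕ∞ :=
  ⨆ I : {I : Set α // M.Indep I ∧ I ⊆ X}, I.1.encard

/-- The rank of the matroid `M`, valued in `ℕ∞`. -/
noncomputable def eRank' (M : Matroid α) : ℕ∞ := M.eRk' M.E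

/-- The nullity of a set `X` in `M`, valued in `ℕ∞` : the corank of the restriction
of `M` to `X`. -/
noncomputable def nullity (M : Matroid α) (X : Set α) : ℕ∞ := (M ↾ X)✶.eRank'

/-- The relative rank of `Y` with respect to `X` : the rank of `Y \ X` in `M / X`. -/
noncomputable def eRelRk (M : Matroid α) (X Y : Set α) : ℕ∞ := (M.contract' X).eRk' (Y \ X)

/-- `B` is a mutual basis in `M` for the indexed set family `X` if `B` is independent
and `X i ∩ B` is a basis of `X i` in `M` for each index `i`. -/
def IsMutualBasis (M : Matroid α) (B : Set α) (X : ι → Set α) : Prop :=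
  M.Indep B ∧ ∀ i, M.IsBasis (X i ∩ B) (X i)

/-- An indexed set family is modular in `M` if it has a mutual basis. -/
def IsModularFamily (M : Matroid α) (X : ι → Set α) : Prop := ∃ B, M.IsMutualBasis B X

/-- `B` is a mutual basis in `M` for the collection `𝓧` of sets if `B` is independent
and `X ∩ B` is a basis of `X` in `M` for each `X ∈ 𝓧`. -/
def IsMutualBasisSet (M : Matroid α) (B : Set α) (𝓧 : Set (Set α)) : Prop :=
  M.Indep B ∧ ∀ X ∈ 𝓧, M.IsBasis (X ∩ B) X

/-- A collection of sets is modular in `M` if it has a mutual basis. -/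
def IsModularSetFamily (M : Matroid α) (𝓧 : Set (Set α)) : Prop :=
  ∃ B, M.IsMutualBasisSet B 𝓧

/-- `(X, Y)` is a modular pair in `M` if `{X, Y}` has a mutual basis. -/
def IsModularPair (M : Matroid α) (X Y : Set α) : Prop := M.IsModularSetFamily {X, Y}

/-- A flat `F` of `M` is modular if it forms a modular pair with every flat of `M`. -/
def IsModularFlat (M : Matroid α) (F : Set α) : Prop :=
  M.IsFlat F ∧ ∀ G, M.IsFlat G → M.IsModularPair F G

/-- A matroid is modular if every flat is modular. -/
def Modular (M : Matroid α) : Prop := ∀ F, M.IsFlat F → M.IsModularFlat F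

/-- An indexed family of sets is skew in `M` if it is modular in `M`, and the
intersection of any two distinct members consists of loops. -/
def IsSkewFamily (M : Matroid α) (X : ι → Set α) : Prop :=
  M.IsModularFamily X ∧ ∀ ⦃i j⦄, i ≠ j → X i ∩ X j ⊆ M.closure ∅

/-- A modular cut of `M` : a collection of flats that is up-closed, closed under
intersections of modular pairs, and closed under intersections of infinite
modular chains. -/
def IsModularCut (M : Matroid α) (𝓕 : Set (Set α)) : Prop :=
  (∀ F ∈ 𝓕, M.IsFlat F) ∧
  (∀ F F', F ∈ 𝓕 → M.IsFlat F' → F ⊆ F' → F' ∈ 𝓕) ∧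
  (∀ F F', F ∈ 𝓕 → F' ∈ 𝓕 → M.IsModularPair F F' → F ∩ F' ∈ 𝓕) ∧
  (∀ 𝓒 ⊆ 𝓕, 𝓒.Infinite → IsChain (· ⊆ ·) 𝓒 → M.IsModularSetFamily 𝓒 → ⋂₀ 𝓒 ∈ 𝓕)

/-- `N` is a quotient of `M` if they have the same ground set, and every set's closure
in `M` is contained in its closure in `N`. -/
def IsQuotient (N M : Matroid α) : Prop := N.E = M.E ∧ ∀ X, M.closure X ⊆ N.closure X

/-- A hyperplane of `M` is a maximal proper flat of `M`. -/
def Hyperplane (M : Matroid α) (H : Set α) : Prop :=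
  M.IsFlat H ∧ H ≠ M.E ∧ ∀ F, M.IsFlat F → H ⊂ F → F = M.E

/-- The discrepancy of the pair `(N, M)` : the minimum of `(B \ B₀).encard` over all
`(N,M)`-basis pairs, i.e. pairs `(B₀, B)` where `B₀` is a base of `N`, `B` is a base
of `M` and `B₀ ⊆ B`. -/
noncomputable def discrepancy (N M : Matroid α) : ℕ∞ :=
  ⨅ p : {p : Set α × Set α // N.IsBase p.1 ∧ M.IsBase p.2 ∧ p.1 ⊆ p.2},
    (p.1.2 \ p.1.1).encard

/-!
Everything reduces to one local condition: `N` is a quotient of `M` exactly when every element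
`e` of an `M`-circuit `C` lies in the `N`-closure of `C \ {e}`, i.e. in an `N`-circuit inside `C`.
An element lies outside a closure precisely when some cocircuit through it avoids the set, so this
condition says that no `M`-circuit meets an `N`-cocircuit in a single element, which is symmetric
under `(N, M) ↦ (M✶, N✶)`. In rank terms, it says that `e` is a loop of `N ／ (C \ {e})`
whenever it is one of `M ／ (C \ {e})`.
-/

section Bridge

variable {M : Matroid α} {C : Set α}

lemma circuit_iff_isCircuit : M.Circuit C ↔ M.IsCircuit C := by
  rw [Circuit, isCircuit_iff_forall_ssubset, dep_iff]
  tauto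

lemma eRk'_eq_eRk (M : Matroid α) (X : Set α) : M.eRk' X = M.eRk X := by
  obtain ⟨I, hI⟩ := M.exists_isBasis' X
  refine le_antisymm (iSup_le fun J ↦ J.2.1.encard_le_eRk_of_subset J.2.2) ?_
  rw [← hI.encard_eq_eRk]
  exact le_iSup (fun J : {J // M.Indep J ∧ J ⊆ X} ↦ J.1.encard) ⟨I, hI.indep, hI.subset⟩

lemma eRelRk_eq_eRk_contract (M : Matroid α) (X Y : Set α) :
    M.eRelRk X Y = (M ／ X).eRk (Y \ X) :=
  eRk'_eq_eRk _ _

end Bridge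

section Cocircuit

variable {M : Matroid α} {X : Set α} {e : α}

lemma exists_isCocircuit_of_notMem_closure (he : e ∈ M.E) (heX : e ∉ M.closure X) :
    ∃ K, M.IsCocircuit K ∧ e ∈ K ∧ Disjoint K X := by
  obtain ⟨I, hI⟩ := M.exists_isBasis' X
  rw [← hI.closure_eq_closure] at heX
  have heI : e ∉ I := fun h ↦ heX (M.subset_closure I hI.indep.subset_ground h)
  have hIe : M.Indep (insert e I) := hI.indep.insert_indep_iff.2 (.inl ⟨he, heX⟩)
  obtain ⟨B, hB, hIB⟩ := hIe.exists_isBase_superset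
  have heB : e ∈ B := hIB (mem_insert e I)
  have hIBe : I ⊆ B \ {e} := subset_sdiff_singleton ((subset_insert e I).trans hIB) heI
  refine ⟨M.E \ M.closure (B \ {e}), hB.compl_closure_sdiff_singleton_isCocircuit heB,
    ⟨he, hB.indep.notMem_closure_sdiff_of_mem heB⟩,
    disjoint_left.2 fun x hxK hxX ↦ hxK.2 (M.closure_subset_closure hIBe ?_)⟩
  exact hI.closure_eq_closure ▸ M.inter_ground_subset_closure X ⟨hxX, hxK.1⟩

lemma mem_closure_iff_forall_isCocircuit (he : e ∈ M.E) :
    e ∈ M.closure X ↔ ∀ K, M.IsCocircuit K → e ∈ K → (K ∩ X).Nonempty := by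
  refine ⟨fun hecl K hK heK ↦ ?_, fun h ↦ by_contra fun heX ↦ ?_⟩
  · by_contra hKX
    rw [not_nonempty_iff_eq_empty, ← disjoint_iff_inter_eq_empty] at hKX
    have heX : e ∉ X := hKX.notMem_of_mem_left heK
    obtain ⟨C, hCX, hC, heC⟩ := exists_isCircuit_of_mem_closure hecl heX
    refine hC.inter_isCocircuit_ne_singleton hK (e := e) (Subset.antisymm ?_ (by simp [heC, heK]))
    rintro x ⟨hxC, hxK⟩
    exact (hCX hxC).resolve_right (hKX.notMem_of_mem_left hxK)
  · obtain ⟨K, hK, heK, hKX⟩ := exists_isCocircuit_of_notMem_closure he heX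
    exact (h K hK heK).ne_empty hKX.inter_eq

end Cocircuit

section Quotient

variable {M N : Matroid α} {I : Set α}

theorem isQuotient_iff_forall_mem_closure_sdiff_singleton (hE : N.E = M.E) :
    N.IsQuotient M ↔ ∀ ⦃C e⦄, M.IsCircuit C → e ∈ C → e ∈ N.closure (C \ {e}) := by
  refine ⟨fun h C e hC heC ↦ h.2 _ (hC.mem_closure_sdiff_singleton_of_mem heC),
    fun h ↦ ⟨hE, fun X e he ↦ ?_⟩⟩
  by_cases heX : e ∈ X
  · exact N.mem_closure_of_mem' heX (hE ▸ mem_ground_of_mem_closure he)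
  obtain ⟨C, hCX, hC, heC⟩ := exists_isCircuit_of_mem_closure he heX
  exact N.closure_subset_closure (sdiff_singleton_subset_iff.2 hCX) (h hC heC)

theorem isQuotient_iff_forall_isCircuit_inter_isCocircuit_ne_singleton (hE : N.E = M.E) :
    N.IsQuotient M ↔ ∀ ⦃C K e⦄, M.IsCircuit C → N.IsCocircuit K → C ∩ K ≠ {e} := by
  rw [isQuotient_iff_forall_mem_closure_sdiff_singleton hE]
  refine ⟨fun h C K e hC hK hCK ↦ ?_, fun h C e hC heC ↦ ?_⟩
  · have heCK : e ∈ C ∩ K := hCK ▸ rfl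
    obtain ⟨x, hxK, hxC, hxe⟩ := (mem_closure_iff_forall_isCocircuit
      (hE ▸ hC.subset_ground heCK.1)).1 (h hC heCK.1) K hK heCK.2
    exact hxe (hCK ▸ ⟨hxC, hxK⟩ : x ∈ ({e} : Set α))
  rw [mem_closure_iff_forall_isCocircuit (hE ▸ hC.subset_ground heC)]
  refine fun K hK heK ↦ by_contra fun hKC ↦
    h hC hK (e := e) (Subset.antisymm ?_ (by simp [heC, heK]))
  exact fun x ⟨hxC, hxK⟩ ↦ by_contra fun hxe ↦ hKC ⟨x, hxK, hxC, hxe⟩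

theorem isQuotient_dual_iff (hE : N.E = M.E) : M✶.IsQuotient N✶ ↔ N.IsQuotient M := by
  rw [isQuotient_iff_forall_isCircuit_inter_isCocircuit_ne_singleton hE,
    isQuotient_iff_forall_isCircuit_inter_isCocircuit_ne_singleton (by simp [hE])]
  simp only [dual_isCocircuit_iff, ← isCocircuit_def]
  exact ⟨fun h C K e hC hK ↦ inter_comm C K ▸ h hK hC,
    fun h C K e hC hK ↦ inter_comm C K ▸ h hK hC⟩

theorem isQuotient_iff_forall_isFlat (hE : N.E = M.E) :
    N.IsQuotient M ↔ ∀ F, N.IsFlat F → M.IsFlat F := by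
  refine ⟨fun h F hF ↦ ?_, fun h ↦ ⟨hE, fun X ↦ ?_⟩⟩
  · rw [isFlat_iff_closure_eq]
    exact ((h.2 F).trans hF.closure.subset).antisymm (M.subset_closure F (hE ▸ hF.subset_ground))
  calc M.closure X = M.closure (X ∩ M.E) := (M.closure_inter_ground X).symm
    _ ⊆ M.closure (N.closure X) :=
        M.closure_subset_closure (hE ▸ N.inter_ground_subset_closure X)
    _ = N.closure X := (h _ (isFlat_closure X)).closure

theorem isQuotient_iff_forall_isCircuit_eq_sUnion (hE : N.E = M.E) :
    N.IsQuotient M ↔ ∀ C, M.IsCircuit C →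
      ∃ 𝓒 : Set (Set α), (∀ C' ∈ 𝓒, N.IsCircuit C') ∧ C = ⋃₀ 𝓒 := by
  rw [isQuotient_iff_forall_mem_closure_sdiff_singleton hE]
  refine ⟨fun h C hC ↦ ?_, fun h C e hC heC ↦ ?_⟩
  · refine ⟨{C' | N.IsCircuit C' ∧ C' ⊆ C}, fun C' hC' ↦ hC'.1,
      (sUnion_subset fun C' hC' ↦ hC'.2).antisymm' fun e heC ↦ ?_⟩
    obtain ⟨C', hC'C, hC', heC'⟩ := exists_isCircuit_of_mem_closure (h hC heC) (by simp)
    rw [insert_sdiff_singleton, insert_eq_of_mem heC] at hC'C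
    exact ⟨C', ⟨hC', hC'C⟩, heC'⟩
  obtain ⟨𝓒, h𝓒, rfl⟩ := h C hC
  obtain ⟨C', hC'𝓒, heC'⟩ := heC
  exact N.closure_subset_closure (sdiff_subset_sdiff_left (subset_sUnion_of_mem hC'𝓒))
    ((h𝓒 C' hC'𝓒).mem_closure_sdiff_singleton_of_mem heC')

lemma IsQuotient.contract (h : N.IsQuotient M) (X : Set α) : (N ／ X).IsQuotient (M ／ X) :=
  ⟨by simp [h.1], fun Y ↦ by
    simpa only [contract_closure_eq] using sdiff_subset_sdiff_left (h.2 _)⟩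

lemma IsQuotient.indep (h : N.IsQuotient M) (hI : N.Indep I) : M.Indep I := by
  rw [indep_iff_forall_notMem_closure_sdiff (h.1 ▸ hI.subset_ground)]
  exact fun e he hecl ↦ hI.notMem_closure_sdiff_of_mem he (h.2 _ hecl)

lemma IsQuotient.eRk_le (h : N.IsQuotient M) (X : Set α) : N.eRk X ≤ M.eRk X :=
  eRk_le_iff.2 fun _ hIX hI ↦ (h.indep hI).encard_le_eRk_of_subset hIX

lemma IsQuotient.eRelRk_le (h : N.IsQuotient M) (X Y : Set α) : N.eRelRk X Y ≤ M.eRelRk X Y := by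
  simpa only [eRelRk_eq_eRk_contract] using (h.contract X).eRk_le (Y \ X)

lemma eRelRk_sdiff_singleton_eq_zero_iff {Y : Set α} {e : α} (heY : e ∈ Y) (heE : e ∈ M.E) :
    M.eRelRk (Y \ {e}) Y = 0 ↔ e ∈ M.closure (Y \ {e}) := by
  rw [eRelRk_eq_eRk_contract, sdiff_sdiff_cancel_left (singleton_subset_iff.2 heY),
    eRk_eq_zero_iff (by simp [heE]), contract_loops_eq]
  simp

theorem isQuotient_iff_forall_eRelRk_le (hE : N.E = M.E) :
    N.IsQuotient M ↔ ∀ X Y, X ⊆ Y → Y ⊆ M.E → N.eRelRk X Y ≤ M.eRelRk X Y := by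
  refine ⟨fun h X Y _ _ ↦ h.eRelRk_le X Y, fun h ↦ ?_⟩
  rw [isQuotient_iff_forall_mem_closure_sdiff_singleton hE]
  intro C e hC heC
  have hM : M.eRelRk (C \ {e}) C = 0 := (eRelRk_sdiff_singleton_eq_zero_iff heC
    (hC.subset_ground heC)).2 (hC.mem_closure_sdiff_singleton_of_mem heC)
  rw [← eRelRk_sdiff_singleton_eq_zero_iff heC (hE ▸ hC.subset_ground heC),
    ← nonpos_iff_eq_zero]
  exact hM ▸ h _ _ sdiff_subset hC.subset_ground

end Quotient

/-- For matroids `M`, `N` on a common ground set, the following are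
equivalent : (1) `N` is a quotient of `M`; (2) `M✶` is a quotient of `N✶`;
(3) every flat of `N` is a flat of `M`; (4) every circuit of `M` is a union of
circuits of `N`; (5) relative rank in `N` is at most relative rank in `M`. -/
theorem isQuotient_tfae (M N : Matroid α) (hE : N.E = M.E) :
    (N.IsQuotient M ↔ M✶.IsQuotient N✶) ∧
    (N.IsQuotient M ↔ ∀ F, N.IsFlat F → M.IsFlat F) ∧
    (N.IsQuotient M ↔ ∀ C, M.Circuit C →
      ∃ 𝓒 : Set (Set α), (∀ C' ∈ 𝓒, N.Circuit C') ∧ C = ⋃₀ 𝓒) ∧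
    (N.IsQuotient M ↔ ∀ X Y, X ⊆ Y → Y ⊆ M.E → N.eRelRk X Y ≤ M.eRelRk X Y) := by
  simp only [circuit_iff_isCircuit]
  exact ⟨(isQuotient_dual_iff hE).symm, isQuotient_iff_forall_isFlat hE,
    isQuotient_iff_forall_isCircuit_eq_sUnion hE, isQuotient_iff_forall_eRelRk_le hE⟩

end Matroid
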